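/- Consider the discrete eikonal setting: Ω := (ℝ/ℤ)^d, Ω_n := {0,1/n,…,(n−1)/n}^d, 𝓜 : Ω → S_d^+ continuous, and for each z ∈ Ω an 𝓜(z)-reduced mesh 𝒯(z). Assume (Limited extension): there is V_0 such that every vertex v of every mesh 𝒯(z), z ∈ Ω, satisfies ‖v‖ ≤ V_0; and (Consistency): there is r_0 > 0 such that for each z ∈ Ω there exists a basis (u_1,…,u_d) of ℤ^d with u_1,…,u_d,−u_1,…,−u_d vertices of 𝒯(z+w) for all w with ‖w‖ ≤ r_0. Let d_n : Ω_n → [0,∞] solve the discrete system. Then: (i) for any n ≥ 2, any z ∈ Ω_n and any nonzero vertex v of 𝒯(z), one has d_n(z) − d_n(z + v/n) ≤ ‖v‖_{𝓜(z)}/n; and (ii) for any n ≥ n_0 := d²V_0^d/r_0, any z ∈ Ω_n and any v ∈ {−1,0,1}^d, one has |d_n(z) − d_n(z + v/n)| ≤ Δ_0/n, where Δ_0 := d²V_0^d M_0 and M_0 := max{√(‖𝓜(z)‖) : z ∈ Ω}. -/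

import Mathlib

open Matrix
open scoped BigOperators ENNReal Classical

noncomputable section

/-- Euclidean norm of a vector of `ℝ^d`. -/
def euclNorm {d : ℕ} (u : Fin d → ℝ) : ℝ := Real.sqrt (u ⬝ᵥ u)

/-- The norm `‖u‖_M := √(uᵀ M u)` associated to a matrix `M`. -/
def normM {d : ℕ} (M : Matrix (Fin d) (Fin d) ℝ) (u : Fin d → ℝ) : ℝ :=
  Real.sqrt (u ⬝ᵥ M.mulVec u)

/-- Operator norm of a matrix, with respect to the euclidean norm. -/
def opNorm {d : ℕ} (M : Matrix (Fin d) (Fin d) ℝ) : ℝ :=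
  sSup {r : ℝ | ∃ u : Fin d → ℝ, euclNorm u = 1 ∧ r = euclNorm (M.mulVec u)}

/-- Anisotropy ratio `κ(M) := max ‖u‖_M/‖v‖_M` over euclidean-unit vectors `u, v`. -/
def kappa {d : ℕ} (M : Matrix (Fin d) (Fin d) ℝ) : ℝ :=
  sSup {r : ℝ | ∃ u v : Fin d → ℝ,
    euclNorm u = 1 ∧ euclNorm v = 1 ∧ r = normM M u / normM M v}

/-- `z` has integer coordinates, i.e. `z ∈ ℤ^d`. -/
def IsIntVec {d : ℕ} (z : Fin d → ℝ) : Prop := ∀ i, ∃ m : ℤ, z i = (m : ℝ)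

/-- `z` belongs to the sub-lattice `u_0 ℤ + ⋯ + u_{k-1} ℤ` generated by the
first `k` vectors of the family `u`. -/
def InLatticeSpan {d : ℕ} (u : Fin d → Fin d → ℝ) (k : ℕ) (z : Fin d → ℝ) : Prop :=
  ∃ c : Fin d → ℤ, (∀ i : Fin d, ¬ ((i : ℕ) < k) → c i = 0) ∧ z = ∑ i, (c i : ℝ) • u i

/-- `u` is an `M`-reduced basis of `ℤ^d`: a basis of the lattice `ℤ^d`
(integer entries, determinant `±1`) such that each `u k` minimizes `‖·‖_M`
among integer vectors outside the sub-lattice spanned by `u 0, …, u (k-1)`. -/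
def IsReducedBasis {d : ℕ} (M : Matrix (Fin d) (Fin d) ℝ) (u : Fin d → Fin d → ℝ) : Prop :=
  (∀ i, IsIntVec (u i)) ∧ |(Matrix.of u).det| = 1 ∧
  ∀ k : Fin d, ∀ z : Fin d → ℝ, IsIntVec z → ¬ InLatticeSpan u (k : ℕ) z →
    normM M (u k) ≤ normM M z

/-- A simplex of `ℝ^d`, described by its vertex set: `d+1` affinely independent points. -/
def IsSimplex (d : ℕ) (V : Finset (Fin d → ℝ)) : Prop :=
  V.card = d + 1 ∧ AffineIndependent ℝ (fun v : V => (v : Fin d → ℝ))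

/-- A (conforming) mesh: a finite collection of simplices such that the intersection
of any two of them is the convex hull of their common vertices. -/
def IsMesh (d : ℕ) (𝒯 : Finset (Finset (Fin d → ℝ))) : Prop :=
  (∀ V ∈ 𝒯, IsSimplex d V) ∧
  ∀ S ∈ 𝒯, ∀ T ∈ 𝒯,
    (convexHull ℝ (S : Set (Fin d → ℝ))) ∩ (convexHull ℝ (T : Set (Fin d → ℝ)))
      = convexHull ℝ ((S ∩ T : Finset (Fin d → ℝ)) : Set (Fin d → ℝ))

/-- An `M`-reduced mesh. -/
def IsReducedMesh {d : ℕ} (M : Matrix (Fin d) (Fin d) ℝ)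
    (𝒯 : Finset (Finset (Fin d → ℝ))) : Prop :=
  IsMesh d 𝒯 ∧
  (⋃ V ∈ 𝒯, convexHull ℝ (V : Set (Fin d → ℝ))) ∈ nhds (0 : Fin d → ℝ) ∧
  (∀ V ∈ 𝒯, ∀ v ∈ V, IsIntVec v) ∧
  (∀ V ∈ 𝒯, MeasureTheory.volume (convexHull ℝ (V : Set (Fin d → ℝ)))
      = ENNReal.ofReal (1 / (Nat.factorial d))) ∧
  (∀ V ∈ 𝒯, (0 : Fin d → ℝ) ∈ V) ∧
  (∀ V ∈ 𝒯, ∀ v ∈ V, ∀ w ∈ V, v ≠ 0 → w ≠ 0 → 0 ≤ v ⬝ᵥ M.mulVec w)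

/-- `z` is a vertex of the mesh `𝒯`. -/
def IsMeshVertex {d : ℕ} (𝒯 : Finset (Finset (Fin d → ℝ))) (z : Fin d → ℝ) : Prop :=
  ∃ V ∈ 𝒯, z ∈ V

/-- The multiplicative distance `d_×(M,N) := sup_{u ≠ 0} |ln ‖u‖_M − ln ‖u‖_N|`. -/
def dTimes {d : ℕ} (M N : Matrix (Fin d) (Fin d) ℝ) : ℝ :=
  sSup {r : ℝ | ∃ u : Fin d → ℝ, u ≠ 0 ∧ r = |Real.log (normM M u) - Real.log (normM N u)|}

/-- The periodic unit box `Ω = (ℝ/ℤ)^d`. -/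
abbrev Torus (d : ℕ) : Type := Fin d → AddCircle (1 : ℝ)

/-- Canonical projection `ℝ^d → (ℝ/ℤ)^d`. -/
def toTorus {d : ℕ} (x : Fin d → ℝ) : Torus d := fun i => (x i : AddCircle (1 : ℝ))

/-- The grid `Ω_n = {0, 1/n, …, (n-1)/n}^d ⊂ Ω`. -/
def IsGridPoint {d : ℕ} (n : ℕ) (z : Torus d) : Prop :=
  ∃ k : Fin d → ℤ, ∀ i, z i = (((k i : ℝ) / (n : ℝ) : ℝ) : AddCircle (1 : ℝ))

/-- The quotient (periodic) distance on the torus. -/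
def dPer {d : ℕ} (z x : Torus d) : ℝ :=
  sInf {r : ℝ | ∃ Z X : Fin d → ℝ, toTorus Z = z ∧ toTorus X = x ∧ r = euclNorm (Z - X)}

/-- The Hopf–Lax update operator associated to the matrix `M`, the stencil (mesh) `𝒯`,
and the grid scale `1/n`: minimum over simplices `T ∈ 𝒯`, and over barycentric
coefficients `α ≥ 0` supported on the nonzero vertices of `T` with total mass 1, of
`‖∑ α_v v/n‖_M + ∑ α_v u(z + v/n)` (with the convention `0·∞ = 0`). -/
def hopfLax {d : ℕ} (M : Matrix (Fin d) (Fin d) ℝ) (𝒯 : Finset (Finset (Fin d → ℝ)))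
    (n : ℕ) (u : Torus d → ℝ≥0∞) (z : Torus d) : ℝ≥0∞ :=
  ⨅ (T : Finset (Fin d → ℝ)) (_ : T ∈ 𝒯) (α : (Fin d → ℝ) → ℝ)
    (_ : ∀ w, 0 ≤ α w) (_ : α 0 = 0) (_ : ∑ w ∈ T, α w = 1),
    ENNReal.ofReal (normM M ((n : ℝ)⁻¹ • ∑ w ∈ T, α w • w)) +
      ∑ w ∈ T, ENNReal.ofReal (α w) * u (z + toTorus ((n : ℝ)⁻¹ • w))

/-- `u` solves the discrete fixed point system: `u(0) = 0` and
`u(z) = Λ_n(u,z)` at every other grid point `z`. -/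
def SolvesDiscrete {d : ℕ} (𝓜 : Torus d → Matrix (Fin d) (Fin d) ℝ)
    (𝒯 : Torus d → Finset (Finset (Fin d → ℝ))) (n : ℕ) (u : Torus d → ℝ≥0∞) : Prop :=
  u 0 = 0 ∧ ∀ z : Torus d, IsGridPoint n z → z ≠ 0 → u z = hopfLax (𝓜 z) (𝒯 z) n u z

/-!
Part (i) is the Hopf–Lax update tested against the barycentric weight concentrated on `v`.

For (ii), write `v = ∑ cᵢ uᵢ` in the consistency basis `(uᵢ)` at `z`. Cramer's rule makes the
`cᵢ` integers, and Hadamard's inequality bounds them by `√d V₀^(d-1)`. Hence `z + v/n` is reached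
from `z` by `∑ |cᵢ|` steps `±uᵢ/n` along a path of length at most `d² V₀^d / n ≤ r₀`, so at every
point of the path each `±uᵢ` is a vertex of the local mesh and (i) applies, at cost `M₀ V₀ / n`.
-/

section EuclideanNorm

variable {d : ℕ}

theorem euclNorm_eq_norm_toLp (u : Fin d → ℝ) :
    euclNorm u = ‖(WithLp.toLp 2 u : EuclideanSpace ℝ (Fin d))‖ := by
  simp [euclNorm, EuclideanSpace.norm_eq, dotProduct, sq]

theorem euclNorm_nonneg (u : Fin d → ℝ) : 0 ≤ euclNorm u := Real.sqrt_nonneg _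

@[simp] theorem euclNorm_zero : euclNorm (0 : Fin d → ℝ) = 0 := by
  simp [euclNorm]

@[simp] theorem euclNorm_neg (u : Fin d → ℝ) : euclNorm (-u) = euclNorm u := by
  simp [euclNorm]

theorem euclNorm_smul (c : ℝ) (u : Fin d → ℝ) : euclNorm (c • u) = |c| * euclNorm u := by
  simp only [euclNorm_eq_norm_toLp, WithLp.toLp_smul, norm_smul, Real.norm_eq_abs]

theorem euclNorm_add_le (u w : Fin d → ℝ) : euclNorm (u + w) ≤ euclNorm u + euclNorm w := by
  simp only [euclNorm_eq_norm_toLp, WithLp.toLp_add]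
  exact norm_add_le _ _

theorem abs_dotProduct_le_euclNorm_mul (u w : Fin d → ℝ) :
    |u ⬝ᵥ w| ≤ euclNorm u * euclNorm w := by
  simpa [euclNorm_eq_norm_toLp, PiLp.inner_apply, dotProduct, mul_comm] using
    abs_real_inner_le_norm (WithLp.toLp 2 u : EuclideanSpace ℝ (Fin d)) (WithLp.toLp 2 w)

theorem euclNorm_le_sqrt_of_abs_le_one {v : Fin d → ℝ} (hv : ∀ i, |v i| ≤ 1) :
    euclNorm v ≤ Real.sqrt d := by
  refine Real.sqrt_le_sqrt ?_
  calc v ⬝ᵥ v = ∑ i, |v i| ^ 2 := by simp [dotProduct, sq]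
    _ ≤ ∑ _i : Fin d, (1 : ℝ) := by
      gcongr with i
      exact pow_le_one₀ (abs_nonneg _) (hv i)
    _ = d := by simp

theorem euclNorm_mulVec_le_opNorm_mul (M : Matrix (Fin d) (Fin d) ℝ) (u : Fin d → ℝ) :
    euclNorm (M *ᵥ u) ≤ opNorm M * euclNorm u := by
  set S := {r : ℝ | ∃ u : Fin d → ℝ, euclNorm u = 1 ∧ r = euclNorm (M *ᵥ u)}
  have hS : BddAbove S := by
    refine ⟨‖Matrix.toEuclideanCLM (𝕜 := ℝ) M‖, ?_⟩
    rintro r ⟨w, hw, rfl⟩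
    have h := (Matrix.toEuclideanCLM (𝕜 := ℝ) M).le_opNorm (WithLp.toLp 2 w)
    rwa [Matrix.toEuclideanCLM_toLp, ← euclNorm_eq_norm_toLp, ← euclNorm_eq_norm_toLp, hw,
      mul_one] at h
  rcases (euclNorm_nonneg u).eq_or_lt with hu | hu
  · have : u = 0 := by
      simpa [euclNorm_eq_norm_toLp] using hu.symm
    simp [this]
  have hunit : euclNorm ((euclNorm u)⁻¹ • u) = 1 := by
    rw [euclNorm_smul, abs_of_pos (inv_pos.2 hu), inv_mul_cancel₀ hu.ne']
  have hle : euclNorm (M *ᵥ ((euclNorm u)⁻¹ • u)) ≤ opNorm M :=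
    le_csSup hS ⟨_, hunit, rfl⟩
  rw [Matrix.mulVec_smul, euclNorm_smul, abs_of_pos (inv_pos.2 hu), inv_mul_le_iff₀ hu] at hle
  linarith

theorem normM_le_sqrt_opNorm_mul (M : Matrix (Fin d) (Fin d) ℝ) (u : Fin d → ℝ) :
    normM M u ≤ Real.sqrt (opNorm M) * euclNorm u := by
  have h : u ⬝ᵥ M *ᵥ u ≤ opNorm M * euclNorm u ^ 2 :=
    calc u ⬝ᵥ M *ᵥ u ≤ euclNorm u * euclNorm (M *ᵥ u) :=
          (le_abs_self _).trans (abs_dotProduct_le_euclNorm_mul _ _)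
      _ ≤ euclNorm u * (opNorm M * euclNorm u) :=
          mul_le_mul_of_nonneg_left (euclNorm_mulVec_le_opNorm_mul M u) (euclNorm_nonneg u)
      _ = opNorm M * euclNorm u ^ 2 := by ring
  calc normM M u ≤ Real.sqrt (opNorm M * euclNorm u ^ 2) := Real.sqrt_le_sqrt h
    _ = Real.sqrt (opNorm M) * euclNorm u := by
      rw [Real.sqrt_mul' _ (sq_nonneg _), Real.sqrt_sq (euclNorm_nonneg u)]

theorem normM_smul_of_nonneg (M : Matrix (Fin d) (Fin d) ℝ) {c : ℝ} (hc : 0 ≤ c)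
    (u : Fin d → ℝ) : normM M (c • u) = c * normM M u := by
  rw [normM, normM, Matrix.mulVec_smul, smul_dotProduct, dotProduct_smul, smul_eq_mul,
    smul_eq_mul, ← mul_assoc, Real.sqrt_mul (mul_nonneg hc hc), Real.sqrt_mul_self hc]

end EuclideanNorm

section IntegerCoordinates

variable {d : ℕ}

theorem abs_det_le_prod_euclNorm (A : Fin d → Fin d → ℝ) :
    |(Matrix.of A).det| ≤ ∏ i, euclNorm (A i) := by
  let b := EuclideanSpace.basisFun (Fin d) ℝ
  let e : Fin d → EuclideanSpace ℝ (Fin d) := fun i => WithLp.toLp 2 (A i)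
  have : Fact (Module.finrank ℝ (EuclideanSpace ℝ (Fin d)) = d) := ⟨finrank_euclideanSpace_fin⟩
  have hdet : b.toBasis.det e = (Matrix.of A).det := by
    rw [Module.Basis.det_apply, ← Matrix.det_transpose]
    rfl
  have h := b.toBasis.orientation.abs_volumeForm_apply_le e
  rw [b.toBasis.orientation.volumeForm_robust' b, hdet] at h
  simpa [e, euclNorm_eq_norm_toLp] using h

theorem IsIntVec.add {u w : Fin d → ℝ} (hu : IsIntVec u) (hw : IsIntVec w) :
    IsIntVec (u + w) := fun i => by
  obtain ⟨a, ha⟩ := hu i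
  obtain ⟨b, hb⟩ := hw i
  exact ⟨a + b, by simp [ha, hb]⟩

theorem IsIntVec.neg {u : Fin d → ℝ} (hu : IsIntVec u) : IsIntVec (-u) := fun i => by
  obtain ⟨a, ha⟩ := hu i
  exact ⟨-a, by simp [ha]⟩

theorem exists_det_eq_intCast {A : Fin d → Fin d → ℝ} (hA : ∀ i, IsIntVec (A i)) :
    ∃ k : ℤ, (Matrix.of A).det = k := by
  choose K hK using hA
  refine ⟨(Matrix.of K).det, ?_⟩
  rw [← eq_intCast (Int.castRingHom ℝ), RingHom.map_det]
  congr 1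
  ext i j
  simp [hK]

theorem exists_intCoeffs_of_abs_det_eq_one {u : Fin d → Fin d → ℝ} (hu : ∀ i, IsIntVec (u i))
    (hdet : |(Matrix.of u).det| = 1) {v : Fin d → ℝ} (hv : IsIntVec v) :
    ∃ c : Fin d → ℤ, v = ∑ i, (c i : ℝ) • u i ∧
      ∀ i, |(c i : ℝ)| ≤ ∏ j, euclNorm (Function.update u i v j) := by
  set U := Matrix.of u
  have hUU : U.det * U.det = 1 := by rw [← abs_mul_abs_self, hdet, one_mul]
  have hint : ∀ i, ∃ k : ℤ, U.det * Uᵀ.cramer v i = k := by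
    intro i
    obtain ⟨e, he⟩ := exists_det_eq_intCast hu
    obtain ⟨k, hk⟩ := exists_det_eq_intCast (A := Function.update u i v) fun j => by
      rcases eq_or_ne j i with rfl | hji
      · simpa using hv
      · simpa [hji] using hu j
    refine ⟨e * k, ?_⟩
    rw [Matrix.cramer_transpose_apply, Int.cast_mul, ← he, ← hk]
    rfl
  choose c hc using hint
  refine ⟨c, ?_, fun i => ?_⟩
  · have hcU : (fun i => (c i : ℝ)) = U.det • Uᵀ.cramer v := funext fun i => (hc i).symm
    calc v = Uᵀ *ᵥ (U.det • Uᵀ.cramer v) := by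
          rw [Matrix.mulVec_smul, Matrix.mulVec_cramer, Matrix.det_transpose, smul_smul, hUU,
            one_smul]
      _ = ∑ i, (c i : ℝ) • u i := by
          rw [← hcU, Matrix.mulVec_transpose, Matrix.vecMul_eq_sum]
          rfl
  · rw [← hc i, abs_mul, hdet, one_mul, Matrix.cramer_transpose_apply]
    exact abs_det_le_prod_euclNorm _

theorem sum_abs_mul_le_sq_mul_pow {u : Fin d → Fin d → ℝ} {V₀ : ℝ}
    (huV : ∀ j, euclNorm (u j) ≤ V₀) {v : Fin d → ℝ} (hv : euclNorm v ≤ Real.sqrt d)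
    {c : Fin d → ℝ} (hc : ∀ i, |c i| ≤ ∏ j, euclNorm (Function.update u i v j)) :
    (∑ i, |c i|) * V₀ ≤ d ^ 2 * V₀ ^ d := by
  rcases Nat.eq_zero_or_pos d with rfl | hd
  · simp
  have hV₀ : 0 ≤ V₀ := (euclNorm_nonneg _).trans (huV ⟨0, hd⟩)
  have hcoeff : ∀ i, |c i| * V₀ ≤ Real.sqrt d * V₀ ^ d := by
    intro i
    have hprod : ∏ j, euclNorm (Function.update u i v j) ≤ euclNorm v * V₀ ^ (d - 1) := by
      rw [← Function.comp_def euclNorm, Function.comp_update,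
        Finset.prod_update_of_mem (Finset.mem_univ i)]
      gcongr
      · exact euclNorm_nonneg v
      · calc ∏ j ∈ Finset.univ \ {i}, euclNorm (u j) ≤ ∏ _j ∈ Finset.univ \ {i}, V₀ :=
              Finset.prod_le_prod (fun j _ => euclNorm_nonneg _) fun j _ => huV j
          _ = V₀ ^ (d - 1) := by simp [Finset.card_sdiff]
    calc |c i| * V₀ ≤ euclNorm v * V₀ ^ (d - 1) * V₀ := by gcongr; exact (hc i).trans hprod
      _ ≤ Real.sqrt d * V₀ ^ d := by
        rw [mul_assoc, pow_sub_one_mul hd.ne']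
        gcongr
  have hsqrt : Real.sqrt d ≤ d :=
    (Real.sqrt_le_left (Nat.cast_nonneg d)).2 (by exact_mod_cast Nat.le_self_pow two_ne_zero d)
  calc (∑ i, |c i|) * V₀ = ∑ i, |c i| * V₀ := Finset.sum_mul _ _ _
    _ ≤ ∑ _i : Fin d, Real.sqrt d * V₀ ^ d := Finset.sum_le_sum fun i _ => hcoeff i
    _ = d * (Real.sqrt d * V₀ ^ d) := by simp
    _ ≤ d ^ 2 * V₀ ^ d := by
      rw [sq, mul_assoc]
      gcongr

end IntegerCoordinates

theorem exists_list_sum_eq_sum_zsmul {ι E : Type*} [AddCommGroup E] (u : ι → E) (c : ι → ℤ)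
    (s : Finset ι) :
    ∃ L : List E, (∀ x ∈ L, ∃ i, x = u i ∨ x = -u i) ∧ L.length = ∑ i ∈ s, (c i).natAbs ∧
      L.sum = ∑ i ∈ s, c i • u i := by
  classical
  induction s using Finset.induction_on with
  | empty => exact ⟨[], by simp⟩
  | insert i s hi ih =>
    obtain ⟨L, hLu, hLlen, hLsum⟩ := ih
    let x := if 0 ≤ c i then u i else -u i
    have hx : (c i).natAbs • x = c i • u i := by
      rw [← natCast_zsmul, Int.natCast_natAbs]
      by_cases hc : 0 ≤ c i
      · simp [x, hc, abs_of_nonneg hc]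
      · simp [x, hc, abs_of_neg (not_le.1 hc)]
    refine ⟨List.replicate (c i).natAbs x ++ L, fun y hy => ?_, ?_, ?_⟩
    · rcases List.mem_append.1 hy with hy | hy
      · refine ⟨i, ?_⟩
        rw [(List.mem_replicate.1 hy).2]
        by_cases hc : 0 ≤ c i <;> simp [x, hc]
      · exact hLu y hy
    · simp [Finset.sum_insert hi, hLlen]
    · simp [Finset.sum_insert hi, hLsum, hx]

section DiscreteSystem

variable {d n : ℕ}

theorem toTorus_add (x y : Fin d → ℝ) : toTorus (x + y) = toTorus x + toTorus y := by
  funext i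
  simp [toTorus]

@[simp] theorem toTorus_zero : toTorus (0 : Fin d → ℝ) = 0 := by
  funext i
  simp [toTorus]

theorem IsGridPoint.add_toTorus_inv_smul {z : Torus d} (hz : IsGridPoint n z)
    {w : Fin d → ℝ} (hw : IsIntVec w) : IsGridPoint n (z + toTorus ((n : ℝ)⁻¹ • w)) := by
  obtain ⟨k, hk⟩ := hz
  choose m hm using hw
  refine ⟨k + m, fun i => ?_⟩
  simp [toTorus, hk i, hm i, div_eq_inv_mul, mul_add]

theorem hopfLax_le_of_mem {M : Matrix (Fin d) (Fin d) ℝ} {𝒯 : Finset (Finset (Fin d → ℝ))}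
    {u : Torus d → ℝ≥0∞} {z : Torus d} {V : Finset (Fin d → ℝ)} (hV : V ∈ 𝒯)
    {v : Fin d → ℝ} (hv : v ∈ V) (hv0 : v ≠ 0) :
    hopfLax M 𝒯 n u z ≤ u (z + toTorus ((n : ℝ)⁻¹ • v)) + ENNReal.ofReal (normM M v / n) := by
  let α : (Fin d → ℝ) → ℝ := fun w => if w = v then 1 else 0
  have hα : ∀ w, 0 ≤ α w := fun w => by by_cases h : w = v <;> simp [α, h]
  have hα0 : α 0 = 0 := by simp [α, hv0.symm]
  have hαsum : ∑ w ∈ V, α w = 1 := by simp [α, hv]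
  have hαv : ∑ w ∈ V, α w • w = v := by simp [α, ite_smul, hv]
  have hαu : ∑ w ∈ V, ENNReal.ofReal (α w) * u (z + toTorus ((n : ℝ)⁻¹ • w)) =
      u (z + toTorus ((n : ℝ)⁻¹ • v)) := by
    simp [α, apply_ite ENNReal.ofReal, ite_mul, hv]
  calc hopfLax M 𝒯 n u z
      ≤ ENNReal.ofReal (normM M ((n : ℝ)⁻¹ • ∑ w ∈ V, α w • w)) +
          ∑ w ∈ V, ENNReal.ofReal (α w) * u (z + toTorus ((n : ℝ)⁻¹ • w)) :=
        iInf₂_le_of_le V hV <| iInf₂_le_of_le α hα <| iInf₂_le_of_le hα0 hαsum le_rfl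
    _ = u (z + toTorus ((n : ℝ)⁻¹ • v)) + ENNReal.ofReal (normM M v / n) := by
      rw [hαv, hαu, normM_smul_of_nonneg _ (by positivity), inv_mul_eq_div, add_comm]

variable {𝓜 : Torus d → Matrix (Fin d) (Fin d) ℝ} {𝒯 : Torus d → Finset (Finset (Fin d → ℝ))}
  {g : Torus d → ℝ≥0∞}

theorem SolvesDiscrete.le_add_normM (hg : SolvesDiscrete 𝓜 𝒯 n g) {z : Torus d}
    (hz : IsGridPoint n z) {V : Finset (Fin d → ℝ)} (hV : V ∈ 𝒯 z) {v : Fin d → ℝ}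
    (hv : v ∈ V) (hv0 : v ≠ 0) :
    g z ≤ g (z + toTorus ((n : ℝ)⁻¹ • v)) + ENNReal.ofReal (normM (𝓜 z) v / n) := by
  rcases eq_or_ne z 0 with rfl | hz0
  · simp [hg.1]
  · exact (hg.2 z hz hz0).trans_le (hopfLax_le_of_mem hV hv hv0)

theorem SolvesDiscrete.le_add_length_nsmul (hg : SolvesDiscrete 𝓜 𝒯 n g) {z : Torus d}
    (hz : IsGridPoint n z) {S : Set (Fin d → ℝ)} {R C : ℝ} (hR : 0 ≤ R)
    (hS : ∀ s ∈ S, IsIntVec s ∧ s ≠ 0)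
    (hvert : ∀ w, euclNorm w ≤ R → ∀ s ∈ S, IsMeshVertex (𝒯 (z + toTorus w)) s)
    (hcost : ∀ y, ∀ s ∈ S, normM (𝓜 y) s ≤ C) (L : List (Fin d → ℝ)) (hL : ∀ s ∈ L, s ∈ S)
    {p : Fin d → ℝ} (hp : IsIntVec p) (hlen : euclNorm p + (L.map euclNorm).sum ≤ R * n) :
    g (z + toTorus ((n : ℝ)⁻¹ • p)) ≤
      g (z + toTorus ((n : ℝ)⁻¹ • (p + L.sum))) + L.length • ENNReal.ofReal (C / n) := by
  induction L generalizing p with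
  | nil => simp
  | cons s L ih =>
    simp only [List.forall_mem_cons, List.map_cons, List.sum_cons] at hL hlen
    obtain ⟨hs_int, hs0⟩ := hS s hL.1
    have hrest : 0 ≤ (L.map euclNorm).sum :=
      List.sum_nonneg fun x hx => by
        obtain ⟨y, -, rfl⟩ := List.mem_map.1 hx
        exact euclNorm_nonneg y
    have hpR : euclNorm ((n : ℝ)⁻¹ • p) ≤ R := by
      rw [euclNorm_smul, abs_inv, Nat.abs_cast, inv_mul_eq_div]
      exact div_le_of_le_mul₀ (Nat.cast_nonneg n) hR (by linarith [euclNorm_nonneg s])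
    obtain ⟨V, hV, hsV⟩ := hvert _ hpR s hL.1
    have hstep := hg.le_add_normM (hz.add_toTorus_inv_smul hp) hV hsV hs0
    rw [add_assoc, ← toTorus_add, ← smul_add] at hstep
    have hwalk := ih hL.2 (hp.add hs_int) (by linarith [euclNorm_add_le p s])
    calc g (z + toTorus ((n : ℝ)⁻¹ • p))
        ≤ g (z + toTorus ((n : ℝ)⁻¹ • (p + s))) + ENNReal.ofReal (C / n) := by
          refine hstep.trans (add_le_add_right (ENNReal.ofReal_le_ofReal ?_) _)
          exact div_le_div_of_nonneg_right (hcost _ s hL.1) (Nat.cast_nonneg n)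
      _ ≤ g (z + toTorus ((n : ℝ)⁻¹ • (p + (s + L.sum)))) +
            (L.length + 1) • ENNReal.ofReal (C / n) := by
          rw [succ_nsmul, ← add_assoc, ← add_assoc p]
          exact add_le_add_left hwalk _

theorem SolvesDiscrete.le_add_of_basis (hg : SolvesDiscrete 𝓜 𝒯 n g) {z : Torus d}
    (hz : IsGridPoint n z) {V₀ r₀ M₀ : ℝ} (hr₀ : 0 ≤ r₀) (hM₀ : 0 ≤ M₀)
    (hM : ∀ y x, normM (𝓜 y) x ≤ M₀ * euclNorm x) {u : Fin d → Fin d → ℝ}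
    (hu_int : ∀ i, IsIntVec (u i)) (hu_det : |(Matrix.of u).det| = 1)
    (hu_le : ∀ i, euclNorm (u i) ≤ V₀)
    (hu_vert : ∀ w, euclNorm w ≤ r₀ → ∀ i,
      IsMeshVertex (𝒯 (z + toTorus w)) (u i) ∧ IsMeshVertex (𝒯 (z + toTorus w)) (-(u i)))
    (hn : (d : ℝ) ^ 2 * V₀ ^ d ≤ r₀ * n) {v : Fin d → ℝ} (hv_int : IsIntVec v)
    (hv : ∀ i, |v i| ≤ 1) :
    g z ≤ g (z + toTorus ((n : ℝ)⁻¹ • v)) + ENNReal.ofReal (d ^ 2 * V₀ ^ d * M₀ / n) := by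
  obtain ⟨c, hvc, hc⟩ := exists_intCoeffs_of_abs_det_eq_one hu_int hu_det hv_int
  obtain ⟨L, hLu, hLlen, hLsum⟩ := exists_list_sum_eq_sum_zsmul u c Finset.univ
  let S : Set (Fin d → ℝ) := {x | ∃ i, x = u i ∨ x = -u i}
  have hS : ∀ x ∈ S, (IsIntVec x ∧ x ≠ 0) ∧ euclNorm x ≤ V₀ := by
    have hu0 : ∀ i, u i ≠ 0 := fun i hi => by
      rw [Matrix.det_eq_zero_of_row_eq_zero i fun j => by simp [hi], abs_zero] at hu_det
      exact zero_ne_one hu_det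
    rintro x ⟨i, rfl | rfl⟩
    · exact ⟨⟨hu_int i, hu0 i⟩, hu_le i⟩
    · exact ⟨⟨(hu_int i).neg, neg_ne_zero.2 (hu0 i)⟩, by simpa using hu_le i⟩
  have hsteps : (L.length : ℝ) * V₀ ≤ d ^ 2 * V₀ ^ d := by
    simp only [hLlen, Nat.cast_sum, Nat.cast_natAbs, Int.cast_abs]
    exact sum_abs_mul_le_sq_mul_pow hu_le (euclNorm_le_sqrt_of_abs_le_one hv) hc
  have hlen : euclNorm (0 : Fin d → ℝ) + (L.map euclNorm).sum ≤ r₀ * n :=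
    calc euclNorm (0 : Fin d → ℝ) + (L.map euclNorm).sum ≤ L.length * V₀ := by
          rw [euclNorm_zero, zero_add, ← nsmul_eq_mul, ← List.length_map (f := euclNorm)]
          exact List.sum_le_card_nsmul _ _ fun x hx => by
            obtain ⟨y, hy, rfl⟩ := List.mem_map.1 hx
            exact (hS y (hLu y hy)).2
      _ ≤ r₀ * n := hsteps.trans hn
  have hwalk := hg.le_add_length_nsmul hz hr₀ (S := S) (C := M₀ * V₀)
    (fun x hx => (hS x hx).1)
    (fun w hw x ⟨i, hi⟩ => hi.elim (· ▸ (hu_vert w hw i).1) (· ▸ (hu_vert w hw i).2))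
    (fun y x hx => (hM y x).trans (mul_le_mul_of_nonneg_left (hS x hx).2 hM₀))
    L hLu (p := 0) (fun _ => ⟨0, by simp⟩) hlen
  rw [smul_zero, toTorus_zero, add_zero, zero_add, hLsum] at hwalk
  rw [hvc]
  simp only [Int.cast_smul_eq_zsmul]
  refine hwalk.trans (add_le_add_right ?_ _)
  rw [← ENNReal.ofReal_nsmul, nsmul_eq_mul, mul_div_assoc']
  refine ENNReal.ofReal_le_ofReal (div_le_div_of_nonneg_right ?_ (Nat.cast_nonneg n))
  calc (L.length : ℝ) * (M₀ * V₀) = L.length * V₀ * M₀ := by ring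
    _ ≤ d ^ 2 * V₀ ^ d * M₀ := by gcongr

end DiscreteSystem

theorem stmt14_general {d : ℕ}
    (𝓜 : Torus d → Matrix (Fin d) (Fin d) ℝ)
    (𝒯 : Torus d → Finset (Finset (Fin d → ℝ)))
    (V₀ : ℝ)
    (hV₀ : ∀ z : Torus d, ∀ V ∈ 𝒯 z, ∀ v ∈ V, euclNorm v ≤ V₀)
    (r₀ : ℝ) (hr₀ : 0 < r₀)
    (hcons : ∀ z : Torus d, ∃ u : Fin d → Fin d → ℝ,
      (∀ i, IsIntVec (u i)) ∧ |(Matrix.of u).det| = 1 ∧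
      ∀ w : Fin d → ℝ, euclNorm w ≤ r₀ →
        ∀ i : Fin d, IsMeshVertex (𝒯 (z + toTorus w)) (u i) ∧
          IsMeshVertex (𝒯 (z + toTorus w)) (-(u i)))
    (M₀ : ℝ) (hM₀ : ∀ z : Torus d, Real.sqrt (opNorm (𝓜 z)) ≤ M₀)
    (n : ℕ)
    (g : Torus d → ℝ≥0∞) (hg : SolvesDiscrete 𝓜 𝒯 n g) :
    (∀ z : Torus d, IsGridPoint n z → ∀ V ∈ 𝒯 z, ∀ v ∈ V, v ≠ 0 →
      g z ≤ g (z + toTorus ((n : ℝ)⁻¹ • v)) + ENNReal.ofReal (normM (𝓜 z) v / n)) ∧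
    ((d : ℝ) ^ 2 * V₀ ^ d / r₀ ≤ (n : ℝ) →
      ∀ z : Torus d, IsGridPoint n z → ∀ v : Fin d → ℝ,
        (∀ i, v i = -1 ∨ v i = 0 ∨ v i = 1) →
        g z ≤ g (z + toTorus ((n : ℝ)⁻¹ • v))
          + ENNReal.ofReal ((d : ℝ) ^ 2 * V₀ ^ d * M₀ / n)) := by
  refine ⟨fun z hz V hV v hv hv0 => hg.le_add_normM hz hV hv hv0, fun hn z hz v hv => ?_⟩
  obtain ⟨u, hu_int, hu_det, hu_vert⟩ := hcons z
  have hu_le : ∀ i, euclNorm (u i) ≤ V₀ := fun i => by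
    obtain ⟨V, hV, hu⟩ := (hu_vert 0 (by simpa using hr₀.le) i).1
    exact hV₀ _ V hV _ hu
  have hM : ∀ y x, normM (𝓜 y) x ≤ M₀ * euclNorm x := fun y x =>
    (normM_le_sqrt_opNorm_mul _ x).trans
      (mul_le_mul_of_nonneg_right (hM₀ y) (euclNorm_nonneg x))
  refine hg.le_add_of_basis hz hr₀.le ((Real.sqrt_nonneg _).trans (hM₀ z)) hM hu_int hu_det
    hu_le hu_vert (((div_le_iff₀ hr₀).1 hn).trans_eq (mul_comm _ _)) (fun i => ?_) (fun i => ?_)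
  · rcases hv i with h | h | h
    exacts [⟨-1, by simp [h]⟩, ⟨0, by simp [h]⟩, ⟨1, by simp [h]⟩]
  · rcases hv i with h | h | h <;> simp [h]

/-- Lemma `lemmaTrueNeigh`: discrete Lipschitz estimates for a solution of the discrete
fixed point system, under the (Limited extension) and (Consistency) assumptions. -/
theorem stmt14 {d : ℕ}
    (𝓜 : Torus d → Matrix (Fin d) (Fin d) ℝ) (hcont : Continuous 𝓜)
    (hpd : ∀ z, (𝓜 z).PosDef)
    (𝒯 : Torus d → Finset (Finset (Fin d → ℝ)))
    (h𝒯 : ∀ z, IsReducedMesh (𝓜 z) (𝒯 z))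
    (V₀ : ℝ)
    (hV₀ : ∀ z : Torus d, ∀ V ∈ 𝒯 z, ∀ v ∈ V, euclNorm v ≤ V₀)
    (r₀ : ℝ) (hr₀ : 0 < r₀)
    (hcons : ∀ z : Torus d, ∃ u : Fin d → Fin d → ℝ,
      (∀ i, IsIntVec (u i)) ∧ |(Matrix.of u).det| = 1 ∧
      ∀ w : Fin d → ℝ, euclNorm w ≤ r₀ →
        ∀ i : Fin d, IsMeshVertex (𝒯 (z + toTorus w)) (u i) ∧
          IsMeshVertex (𝒯 (z + toTorus w)) (-(u i)))
    (M₀ : ℝ) (hM₀ : ∀ z : Torus d, Real.sqrt (opNorm (𝓜 z)) ≤ M₀)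
    (n : ℕ) (hn : 2 ≤ n)
    (g : Torus d → ℝ≥0∞) (hg : SolvesDiscrete 𝓜 𝒯 n g) :
    (∀ z : Torus d, IsGridPoint n z → ∀ V ∈ 𝒯 z, ∀ v ∈ V, v ≠ 0 →
      g z ≤ g (z + toTorus ((n : ℝ)⁻¹ • v)) + ENNReal.ofReal (normM (𝓜 z) v / n)) ∧
    ((d : ℝ) ^ 2 * V₀ ^ d / r₀ ≤ (n : ℝ) →
      ∀ z : Torus d, IsGridPoint n z → ∀ v : Fin d → ℝ,
        (∀ i, v i = -1 ∨ v i = 0 ∨ v i = 1) →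
        g z ≤ g (z + toTorus ((n : ℝ)⁻¹ • v))
          + ENNReal.ofReal ((d : ℝ) ^ 2 * V₀ ^ d * M₀ / n)) :=
  stmt14_general 𝓜 𝒯 V₀ hV₀ r₀ hr₀ hcons M₀ hM₀ n g hg
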